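/- Let R > 0 and for T ∈ (−1/R, 1/R) define a(T) = arsinh(RT/√(1−R²T²)) and h_c(T) = −2a(T) + √(4a(T)² + π²). Then: (i) h_c(0) = π; (ii) T ↦ h_c(T) is strictly decreasing on (−1/R, 1/R); (iii) h_c(T) → +∞ as T → (−1/R)⁺; (iv) h_c(T) → 0 as T → (1/R)⁻. -/

import Mathlib

open Filter

/-- `a(T) = arsinh(RT/√(1−R²T²))`. -/
noncomputable def braneA (R T : ℝ) : ℝ :=
  Real.arsinh (R * T / Real.sqrt (1 - R ^ 2 * T ^ 2))

/-- The critical modulus `h_c(T) = −2a(T) + √(4a(T)² + π²)` (equation (2.20)). -/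
noncomputable def hCrit (R T : ℝ) : ℝ :=
  -2 * braneA R T + Real.sqrt (4 * braneA R T ^ 2 + Real.pi ^ 2)

private lemma gAux_strictAnti :
    StrictAnti (fun a : ℝ => -2 * a + Real.sqrt (4 * a ^ 2 + Real.pi ^ 2)) := by
  intro a b hab
  have hSa2 : Real.sqrt (4 * a ^ 2 + Real.pi ^ 2) ^ 2 = 4 * a ^ 2 + Real.pi ^ 2 :=
    Real.sq_sqrt (by positivity)
  have hSb2 : Real.sqrt (4 * b ^ 2 + Real.pi ^ 2) ^ 2 = 4 * b ^ 2 + Real.pi ^ 2 :=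
    Real.sq_sqrt (by positivity)
  have hSa0 : 0 ≤ Real.sqrt (4 * a ^ 2 + Real.pi ^ 2) := Real.sqrt_nonneg _
  have hSb0 : 0 ≤ Real.sqrt (4 * b ^ 2 + Real.pi ^ 2) := Real.sqrt_nonneg _
  have hpi := Real.pi_pos
  have hSa : 2 * a < Real.sqrt (4 * a ^ 2 + Real.pi ^ 2) := by
    nlinarith [sq_nonneg (Real.sqrt (4 * a ^ 2 + Real.pi ^ 2) - 2 * a)]
  dsimp only
  nlinarith [mul_pos (sub_pos.2 hab) (sub_pos.2 hSa),
    sq_nonneg (Real.sqrt (4 * a ^ 2 + Real.pi ^ 2) + Real.sqrt (4 * b ^ 2 + Real.pi ^ 2)),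
    sq_nonneg (Real.sqrt (4 * a ^ 2 + Real.pi ^ 2) - Real.sqrt (4 * b ^ 2 + Real.pi ^ 2))]

private lemma wAux_lt {s t : ℝ} (hs : -1 < s) (ht : t < 1) (hst : s < t) :
    s / Real.sqrt (1 - s ^ 2) < t / Real.sqrt (1 - t ^ 2) := by
  have hs1 : s < 1 := hst.trans_le ht.le
  have ht1 : -1 < t := hs.trans hst
  have hA : 0 < Real.sqrt (1 - s ^ 2) := Real.sqrt_pos.2 (by nlinarith)
  have hB : 0 < Real.sqrt (1 - t ^ 2) := Real.sqrt_pos.2 (by nlinarith)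
  have hA2 : Real.sqrt (1 - s ^ 2) ^ 2 = 1 - s ^ 2 := Real.sq_sqrt (by nlinarith)
  have hB2 : Real.sqrt (1 - t ^ 2) ^ 2 = 1 - t ^ 2 := Real.sq_sqrt (by nlinarith)
  rw [div_lt_div_iff₀ hA hB]
  rcases le_or_gt t 0 with h0 | h0
  · -- s < t ≤ 0
    have hss : t ^ 2 < s ^ 2 := by nlinarith
    have hAB : Real.sqrt (1 - s ^ 2) < Real.sqrt (1 - t ^ 2) :=
      Real.sqrt_lt_sqrt (by nlinarith) (by nlinarith)
    nlinarith [mul_pos hA hB]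
  · rcases le_or_gt s 0 with h0' | h0'
    · have : s * Real.sqrt (1 - t ^ 2) ≤ 0 := mul_nonpos_of_nonpos_of_nonneg h0' hB.le
      nlinarith [mul_pos h0 hA]
    · -- 0 < s < t
      have hss : s ^ 2 < t ^ 2 := by nlinarith
      have hAB : Real.sqrt (1 - t ^ 2) < Real.sqrt (1 - s ^ 2) :=
        Real.sqrt_lt_sqrt (by nlinarith) (by nlinarith)
      nlinarith [mul_pos h0' hB]

private lemma braneA_eq (R T : ℝ) :
    braneA R T = Real.arsinh ((R * T) / Real.sqrt (1 - (R * T) ^ 2)) := by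
  rw [braneA, show 1 - R ^ 2 * T ^ 2 = 1 - (R * T) ^ 2 by ring]

private lemma arsinh_atTop : Tendsto Real.arsinh atTop atTop :=
  tendsto_atTop_atTop_of_monotone Real.arsinh_strictMono.monotone fun b => by
    obtain ⟨a, ha⟩ := Real.arsinh_surjective b; exact ⟨a, ha.ge⟩

private lemma arsinh_atBot : Tendsto Real.arsinh atBot atBot :=
  tendsto_atBot_atBot_of_monotone Real.arsinh_strictMono.monotone fun b => by
    obtain ⟨a, ha⟩ := Real.arsinh_surjective b; exact ⟨a, ha.le⟩

private lemma hCrit_nonneg (R T : ℝ) : 0 ≤ hCrit R T := by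
  have h1 : 2 * braneA R T ≤ Real.sqrt (4 * braneA R T ^ 2 + Real.pi ^ 2) := by
    rcases le_or_gt (braneA R T) 0 with h | h
    · linarith [Real.sqrt_nonneg (4 * braneA R T ^ 2 + Real.pi ^ 2)]
    · have := Real.sqrt_le_sqrt (show 4 * braneA R T ^ 2 ≤ 4 * braneA R T ^ 2 + Real.pi ^ 2 by
        nlinarith [Real.pi_pos])
      calc 2 * braneA R T = Real.sqrt ((2 * braneA R T) ^ 2) := by
            rw [Real.sqrt_sq (by positivity)]
        _ ≤ _ := by rw [show (2 * braneA R T) ^ 2 = 4 * braneA R T ^ 2 by ring]; exact this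
  unfold hCrit; linarith

/-- **Properties of the critical modulus of the BTZ/thermal-AdS₃ phase transition.**
For `T ∈ (−1/R, 1/R)`: (i) `h_c(0) = π`; (ii) `h_c` is strictly decreasing;
(iii) `h_c(T) → +∞` as `T → (−1/R)⁺`; (iv) `h_c(T) → 0` as `T → (1/R)⁻`. -/
theorem hCrit_properties (R : ℝ) (hR : 0 < R) :
    hCrit R 0 = Real.pi
    ∧ StrictAntiOn (hCrit R) (Set.Ioo (-(1 / R)) (1 / R))
    ∧ Tendsto (hCrit R) (nhdsWithin (-(1 / R)) (Set.Ioi (-(1 / R)))) atTop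
    ∧ Tendsto (hCrit R) (nhdsWithin (1 / R) (Set.Iio (1 / R))) (nhds 0) := by
  have hRne : R ≠ 0 := hR.ne'
  have hlt : -(1 / R) < 1 / R := by
    have : (0:ℝ) < 1 / R := by positivity
    linarith
  -- a key rewriting of the boundary point
  have hbd : R * (1 / R) = 1 := by field_simp
  -- (ii) pieces: braneA strictly mono on the interval
  have hmono : ∀ s ∈ Set.Ioo (-(1 / R)) (1 / R), ∀ t ∈ Set.Ioo (-(1 / R)) (1 / R),
      s < t → braneA R s < braneA R t := by
    rintro s ⟨hs1, hs2⟩ t ⟨ht1, ht2⟩ hst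
    rw [braneA_eq, braneA_eq, Real.arsinh_lt_arsinh]
    have h1 : -1 < R * s := by
      have := mul_lt_mul_of_pos_left hs1 hR
      rw [mul_neg, hbd] at this; linarith
    have h2 : R * t < 1 := by
      have := mul_lt_mul_of_pos_left ht2 hR
      rwa [hbd] at this
    exact wAux_lt h1 h2 (by nlinarith)
  refine ⟨?_, ?_, ?_, ?_⟩
  · -- (i)
    have : braneA R 0 = 0 := by simp [braneA]
    rw [hCrit, this]
    rw [show 4 * (0:ℝ) ^ 2 + Real.pi ^ 2 = Real.pi ^ 2 by ring,
      Real.sqrt_sq Real.pi_pos.le]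
    ring
  · -- (ii)
    intro s hs t ht hst
    exact gAux_strictAnti (hmono s hs t ht hst)
  · -- (iii)
    have hAbot : Tendsto (braneA R) (nhdsWithin (-(1 / R)) (Set.Ioi (-(1 / R)))) atBot := by
      have hnum : Tendsto (fun T => R * T)
          (nhdsWithin (-(1 / R)) (Set.Ioi (-(1 / R)))) (nhds (-1)) := by
        have : Tendsto (fun T => R * T) (nhds (-(1 / R))) (nhds (R * -(1 / R))) :=
          (continuous_const.mul continuous_id).tendsto _
        rw [show R * -(1 / R) = -1 by field_simp] at this
        exact this.mono_left nhdsWithin_le_nhds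
      have hden : Tendsto (fun T => Real.sqrt (1 - R ^ 2 * T ^ 2))
          (nhdsWithin (-(1 / R)) (Set.Ioi (-(1 / R)))) (nhdsWithin 0 (Set.Ioi 0)) := by
        apply tendsto_nhdsWithin_of_tendsto_nhds_of_eventually_within
        · have : Tendsto (fun T => Real.sqrt (1 - R ^ 2 * T ^ 2)) (nhds (-(1 / R)))
              (nhds (Real.sqrt (1 - R ^ 2 * (-(1 / R)) ^ 2))) :=
            (Real.continuous_sqrt.comp (by continuity)).tendsto _
          rw [show 1 - R ^ 2 * (-(1 / R)) ^ 2 = 0 by field_simp; ring, Real.sqrt_zero] at this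
          exact this.mono_left nhdsWithin_le_nhds
        · filter_upwards [Ioo_mem_nhdsGT_of_mem (Set.mem_Ico.2 ⟨le_refl _, hlt⟩)] with T hT
          have h1 : -(1 / R) < T := hT.1
          have h2 : T < 1 / R := hT.2
          have ha : -1 < R * T := by
            have := mul_lt_mul_of_pos_left h1 hR
            rw [mul_neg, hbd] at this; linarith
          have hb : R * T < 1 := by
            have := mul_lt_mul_of_pos_left h2 hR; rwa [hbd] at this
          exact Real.sqrt_pos.2 (by nlinarith)
      have hinv := tendsto_inv_nhdsGT_zero.comp hden
      have hdiv : Tendsto (fun T => R * T / Real.sqrt (1 - R ^ 2 * T ^ 2))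
          (nhdsWithin (-(1 / R)) (Set.Ioi (-(1 / R)))) atBot := by
        simp only [div_eq_mul_inv]
        exact hnum.neg_mul_atTop (by norm_num) hinv
      exact arsinh_atBot.comp hdiv
    have h2a : Tendsto (fun T => -2 * braneA R T)
        (nhdsWithin (-(1 / R)) (Set.Ioi (-(1 / R)))) atTop :=
      (tendsto_const_mul_atTop_of_neg (by norm_num : (-2:ℝ) < 0)).2 hAbot
    apply tendsto_atTop_mono _ h2a
    intro T
    exact le_add_of_nonneg_right (Real.sqrt_nonneg _)
  · -- (iv)
    have hAtop : Tendsto (braneA R) (nhdsWithin (1 / R) (Set.Iio (1 / R))) atTop := by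
      have hnum : Tendsto (fun T => R * T)
          (nhdsWithin (1 / R) (Set.Iio (1 / R))) (nhds 1) := by
        have : Tendsto (fun T => R * T) (nhds (1 / R)) (nhds (R * (1 / R))) :=
          (continuous_const.mul continuous_id).tendsto _
        rw [hbd] at this
        exact this.mono_left nhdsWithin_le_nhds
      have hden : Tendsto (fun T => Real.sqrt (1 - R ^ 2 * T ^ 2))
          (nhdsWithin (1 / R) (Set.Iio (1 / R))) (nhdsWithin 0 (Set.Ioi 0)) := by
        apply tendsto_nhdsWithin_of_tendsto_nhds_of_eventually_within
        · have : Tendsto (fun T => Real.sqrt (1 - R ^ 2 * T ^ 2)) (nhds (1 / R))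
              (nhds (Real.sqrt (1 - R ^ 2 * (1 / R) ^ 2))) :=
            (Real.continuous_sqrt.comp (by continuity)).tendsto _
          rw [show 1 - R ^ 2 * (1 / R) ^ 2 = 0 by field_simp; ring, Real.sqrt_zero] at this
          exact this.mono_left nhdsWithin_le_nhds
        · filter_upwards [Ioo_mem_nhdsLT_of_mem (Set.mem_Ioc.2 ⟨hlt, le_refl _⟩)] with T hT
          have h1 : -(1 / R) < T := hT.1
          have h2 : T < 1 / R := hT.2
          have ha : -1 < R * T := by
            have := mul_lt_mul_of_pos_left h1 hR
            rw [mul_neg, hbd] at this; linarith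
          have hb : R * T < 1 := by
            have := mul_lt_mul_of_pos_left h2 hR; rwa [hbd] at this
          exact Real.sqrt_pos.2 (by nlinarith)
      have hinv := tendsto_inv_nhdsGT_zero.comp hden
      have hdiv : Tendsto (fun T => R * T / Real.sqrt (1 - R ^ 2 * T ^ 2))
          (nhdsWithin (1 / R) (Set.Iio (1 / R))) atTop := by
        simp only [div_eq_mul_inv]
        exact hnum.pos_mul_atTop (by norm_num) hinv
      exact arsinh_atTop.comp hdiv
    have hupperT : Tendsto (fun T => Real.pi ^ 2 / (4 * braneA R T))
        (nhdsWithin (1 / R) (Set.Iio (1 / R))) (nhds 0) :=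
      Tendsto.div_atTop tendsto_const_nhds (hAtop.const_mul_atTop (by norm_num))
    apply tendsto_of_tendsto_of_tendsto_of_le_of_le' tendsto_const_nhds hupperT
    · exact Eventually.of_forall fun T => hCrit_nonneg R T
    · filter_upwards [hAtop.eventually_gt_atTop 0] with T hA
      set a := braneA R T with ha
      have hS2 : Real.sqrt (4 * a ^ 2 + Real.pi ^ 2) ^ 2 = 4 * a ^ 2 + Real.pi ^ 2 :=
        Real.sq_sqrt (by positivity)
      rw [le_div_iff₀ (by positivity)]
      have key : 4 * a * Real.sqrt (4 * a ^ 2 + Real.pi ^ 2) ≤ Real.pi ^ 2 + 8 * a ^ 2 := by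
        nlinarith [sq_nonneg (Real.sqrt (4 * a ^ 2 + Real.pi ^ 2) - 2 * a)]
      unfold hCrit
      nlinarith
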